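/- Let $d=2m+1\ge 5$ and $n\ge k\ge d$. With $h_i=\binom{k-d+i}{i}+(n-k)\binom{k-d+i-1}{i-1}$ for $0\le i\le m$ and $h_{d-i}=h_i$: (a) if $k=d$ then $h_i=n-d+1$ for all $1\le i\le d-1$ (the minimal $h$-vector, attained by the multiplex); (b) if $k=n$ then $h_i=\binom{n-d+i}{i}$ for $1\le i\le m$ (the maximal $h$-vector, attained by the cyclic polytope); (c) for fixed $d,n$ the value $h_i$ is weakly increasing in $k$ for each fixed $i\le m$. -/

import Mathlib

/-!
The cases `k = d` and `k = n` are direct evaluations. For monotonicity in `k`, Pascal's rule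
applied to `C(k-d+i+1, i)` gives `h_i(k+1) - h_i(k) = (n-k) (C(k-d+i, i-1) - C(k-d+i-1, i-1)) ≥ 0`.
-/

/-- Integer binomial coefficient, zero outside the range `0 ≤ b ≤ a`. -/
def ch (a b : ℤ) : ℤ := if 0 ≤ b ∧ b ≤ a then ((a.toNat).choose b.toNat : ℤ) else 0

theorem ch_natCast (a b : ℕ) : ch a b = a.choose b := by
  unfold ch
  split_ifs with h
  · simp
  · rw [Nat.choose_eq_zero_of_lt (by omega), Nat.cast_zero]

theorem ch_self {a : ℤ} (ha : 0 ≤ a) : ch a a = 1 := by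
  simp [ch, ha]

theorem ch_neg_one (a : ℤ) : ch a (-1) = 0 := by
  simp [ch]

theorem choose_add_mul_choose_le_succ (a j c : ℕ) :
    (a + j + 1).choose (j + 1) + (c + 1) * (a + j).choose j ≤
      (a + 1 + j + 1).choose (j + 1) + c * (a + 1 + j).choose j := by
  have pascal : (a + 1 + j + 1).choose (j + 1) =
      (a + j + 1).choose j + (a + j + 1).choose (j + 1) := by
    rw [show a + 1 + j + 1 = a + j + 1 + 1 by omega, Nat.choose_succ_succ]
  have hmono : (a + j).choose j ≤ (a + j + 1).choose j := Nat.choose_le_succ (a + j) j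
  rw [pascal, show a + 1 + j = a + j + 1 by omega]
  nlinarith

/-- `h_i` of the ordinary polytope `P^{d,k,n}`; the formula is the paper's for `i ≤ (d-1)/2`. -/
def ordinaryH (d n k i : ℕ) : ℤ :=
  ch ((k : ℤ) - d + i) (i : ℤ) + ((n : ℤ) - k) * ch ((k : ℤ) - d + i - 1) ((i : ℤ) - 1)

namespace ordinaryH

variable {d n k : ℕ}

theorem of_eq_dim {i : ℕ} (hi : 1 ≤ i) : ordinaryH d n d i = (n : ℤ) - d + 1 := by
  simp only [ordinaryH, sub_self, zero_add]
  rw [ch_self (by positivity), ch_self (by omega)]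
  ring

theorem of_eq_vertices (i : ℕ) : ordinaryH d n n i = ch ((n : ℤ) - d + i) (i : ℤ) := by
  simp [ordinaryH]

theorem zero (hk : d ≤ k) : ordinaryH d n k 0 = 1 := by
  simp only [ordinaryH, Nat.cast_zero, add_zero, zero_sub, ch_neg_one, mul_zero]
  rw [show (k : ℤ) - d = (k - d : ℕ) by omega]
  exact (ch_natCast (k - d) 0).trans (by simp)

theorem succ (hk : d ≤ k) (hkn : k ≤ n) (j : ℕ) :
    ordinaryH d n k (j + 1) =
      ((k - d + j + 1).choose (j + 1) + (n - k) * (k - d + j).choose j : ℕ) := by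
  have hnk : (n : ℤ) - k = (n - k : ℕ) := by omega
  rw [ordinaryH, hnk, show (k : ℤ) - d + (j + 1 : ℕ) - 1 = (k - d + j : ℕ) by omega,
    show (k : ℤ) - d + (j + 1 : ℕ) = (k - d + j + 1 : ℕ) by omega,
    show ((j + 1 : ℕ) : ℤ) - 1 = j by omega, ch_natCast, ch_natCast]
  push_cast
  rfl

theorem le_succ (hk : d ≤ k) (hkn : k < n) (i : ℕ) :
    ordinaryH d n k i ≤ ordinaryH d n (k + 1) i := by
  cases i with
  | zero => rw [zero hk, zero (by omega)]
  | succ j =>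
    rw [succ hk hkn.le, succ (by omega) hkn, Nat.cast_le,
      show n - k = n - (k + 1) + 1 by omega, show k + 1 - d = k - d + 1 by omega]
    exact choose_add_mul_choose_le_succ (k - d) j (n - (k + 1))

theorem monotoneOn (i : ℕ) : MonotoneOn (fun k ↦ ordinaryH d n k i) (Set.Icc d n) :=
  monotoneOn_of_le_add_one Set.ordConnected_Icc fun k _ hk hk1 ↦
    le_succ hk.1 (by simpa using hk1.2) i

end ordinaryH

theorem ordinary_h_vector_extremes_general (d m n : ℕ)
    (H : ℕ → ℕ → ℤ)
    (hH : ∀ k i, H k i =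
      ch ((k : ℤ) - d + i) (i : ℤ) + ((n : ℤ) - k) * ch ((k : ℤ) - d + i - 1) ((i : ℤ) - 1)) :
    (∀ i, 1 ≤ i → i ≤ d - 1 → (if i ≤ m then H d i else H d (d - i)) = (n : ℤ) - d + 1) ∧
    (∀ i, 1 ≤ i → i ≤ m → H n i = ch ((n : ℤ) - d + i) (i : ℤ)) ∧
    (∀ k k' i, d ≤ k → k ≤ k' → k' ≤ n → i ≤ m → H k i ≤ H k' i) := by
  obtain rfl : H = fun k i ↦ ordinaryH d n k i := funext₂ hH
  refine ⟨fun i hi hid ↦ ?_, fun i _ _ ↦ ordinaryH.of_eq_vertices i,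
    fun k k' i hk hkk' hk'n _ ↦
      ordinaryH.monotoneOn i ⟨hk, hkk'.trans hk'n⟩ ⟨hk.trans hkk', hk'n⟩ hkk'⟩
  split_ifs
  · exact ordinaryH.of_eq_dim hi
  · exact ordinaryH.of_eq_dim (by omega)

/-- Extreme and monotone behaviour of the toric `h`-vectors
`H k i = C(k-d+i,i) + (n-k)C(k-d+i-1,i-1)` of ordinary polytopes `P^{d,k,n}`:
(a) for `k = d` (the multiplex) all middle entries equal `n-d+1`;
(b) for `k = n` (the cyclic polytope) `h_i = C(n-d+i,i)`;
(c) for fixed `d, n` each `h_i` (`i ≤ m`) is weakly increasing in `k`. -/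
theorem ordinary_h_vector_extremes (d m n : ℕ) (hd : d = 2 * m + 1) (hd5 : 5 ≤ d)
    (hn : d ≤ n)
    (H : ℕ → ℕ → ℤ)
    (hH : ∀ k i, H k i =
      ch ((k : ℤ) - d + i) (i : ℤ) + ((n : ℤ) - k) * ch ((k : ℤ) - d + i - 1) ((i : ℤ) - 1)) :
    (∀ i, 1 ≤ i → i ≤ d - 1 → (if i ≤ m then H d i else H d (d - i)) = (n : ℤ) - d + 1) ∧
    (∀ i, 1 ≤ i → i ≤ m → H n i = ch ((n : ℤ) - d + i) (i : ℤ)) ∧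
    (∀ k k' i, d ≤ k → k ≤ k' → k' ≤ n → i ≤ m → H k i ≤ H k' i) :=
  ordinary_h_vector_extremes_general d m n H hH
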